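/- arXiv:0903.0261 — 5 statements merged into one kernel-verified Lean document; each statement's English description precedes it below -/
import Mathlib

section
/- Suppose power series F(t), G(t) ∈ ℚ[[t]] with G(0) ≠ 0 satisfy F(t) = G(t·F(t)). Then for all integers k and d, (k+d)·[t^d]F(t)^k = k·[t^d]G(t)^{k+d}, where [t^d] denotes the coefficient of t^d. -/
/-! Write `w = X F`, so that the hypothesis says `F = G(w)` and hence `G(w)^(k+n) = F^(k+n)`.
For every power series `A` one has `[X^j] A(w) · F^(-j-1) · w' = [X^j] A`: by linearity it
suffices to take `A = X^i`, where it reduces to `[X^r] F^(-r-1) w' = δ_{r,0}`, and this follows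
from the Euler identity `[X^r] X (F^m)' = r [X^r] F^m` at `m = -r`. Taking `A = G^(k+n)` and using
the Euler identity once more at `m = k` gives the theorem; Laurent coefficients in negative
degrees vanish on both sides. -/

open PowerSeries

/-- Substitution `G(H(t))` of a power series `H` with zero constant term into `G`,
defined coefficientwise. -/
noncomputable def compPS (G H : PowerSeries ℚ) : PowerSeries ℚ :=
  PowerSeries.mk fun n =>
    PowerSeries.coeff n (∑ k ∈ Finset.range (n + 1), PowerSeries.coeff k G • H ^ k)

theorem Derivation.leibniz_val_zpow {R A M : Type*} [CommRing R] [CommRing A] [Algebra R A]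
    [AddCommGroup M] [Module A M] [Module R M] (D : Derivation R A M) (u : Aˣ) (n : ℤ) :
    D ↑(u ^ n) = (n * ↑(u ^ (n - 1)) : A) • D ↑u := by
  have hmul {a b c : ℤ} (h : a + b = c) : (↑(u ^ a) : A) * ↑(u ^ b) = ↑(u ^ c) := by
    rw [← Units.val_mul, ← zpow_add, h]
  induction n using Int.induction_on with
  | zero => simp
  | succ n ih =>
    have h := hmul (a := 1) (b := n - 1) (c := n) (by ring)
    rw [zpow_add_one, Units.val_mul, D.leibniz, ih, smul_smul, ← add_smul, add_sub_cancel_right]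
    congr 1
    rw [zpow_one] at h
    push_cast
    linear_combination (n : A) * h
  | pred n ih =>
    have h₁ := hmul (a := -n) (b := -2) (c := -n - 1 - 1) (by ring)
    have h₂ := hmul (a := -1) (b := -n - 1) (c := -n - 1 - 1) (by ring)
    have hsq : (↑(u ^ (-2 : ℤ)) : A) = ↑u⁻¹ ^ 2 := by
      rw [← Units.val_pow_eq_pow_val, ← zpow_natCast, inv_zpow']
      rfl
    rw [zpow_sub_one, Units.val_mul, D.leibniz, ih, D.leibniz_of_mul_eq_one u.inv_mul, smul_smul,
      smul_smul, ← add_smul]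
    congr 1
    rw [zpow_neg_one] at h₂
    rw [hsq] at h₁
    push_cast
    linear_combination -h₁ - (n : A) * h₂

theorem map_val_zpow_of_map_val_eq {F M N : Type*} [Monoid M] [Monoid N] [FunLike F M N]
    [MonoidHomClass F M N] {f : F} {u : Mˣ} {v : Nˣ} (h : f u = v) (n : ℤ) :
    f ↑(u ^ n) = ↑(v ^ n) := by
  have hv : Units.map (f : M →* N) u = v := Units.ext h
  rw [← hv, ← map_zpow]
  rfl

theorem HahnSeries.ofPowerSeries_val_zpow {K : Type*} [Field K] (u : K⟦X⟧ˣ) (n : ℤ) :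
    HahnSeries.ofPowerSeries ℤ K ↑(u ^ n) = HahnSeries.ofPowerSeries ℤ K ↑u ^ n :=
  (map_val_zpow_of_map_val_eq
    (v := Units.map (HahnSeries.ofPowerSeries ℤ K : K⟦X⟧ →* LaurentSeries K) u) rfl n).trans
    (Units.val_zpow_eq_zpow_val _ _)

namespace PowerSeries

variable {R : Type*} [CommRing R]

theorem coeff_X_mul_derivative (f : R⟦X⟧) (n : ℕ) :
    coeff n (X * d⁄dX R f) = n * coeff n f := by
  cases n with
  | zero => simp
  | succ n => rw [coeff_succ_X_mul, coeff_derivative, mul_comm, Nat.cast_succ]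

theorem derivative_X_mul (f : R⟦X⟧) : d⁄dX R (X * f) = f + X * d⁄dX R f := by
  rw [Derivation.leibniz, derivative_X, smul_eq_mul, smul_eq_mul, mul_one, add_comm]

theorem val_zpow_sub_one_mul_derivative_X_mul (u : R⟦X⟧ˣ) (m : ℤ) :
    (↑(u ^ (m - 1)) : R⟦X⟧) * d⁄dX R (X * (u : R⟦X⟧)) =
      (↑(u ^ m) : R⟦X⟧) + X * ((↑(u ^ (m - 1)) : R⟦X⟧) * d⁄dX R ↑u) := by
  rw [derivative_X_mul, mul_add, ← Units.val_mul, ← zpow_add_one, sub_add_cancel, mul_left_comm]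

theorem coeff_zpow_sub_one_mul_derivative_X_mul (u : R⟦X⟧ˣ) (m : ℤ) (r : ℕ) :
    m * coeff r ((↑(u ^ (m - 1)) : R⟦X⟧) * d⁄dX R (X * (u : R⟦X⟧))) =
      (m + r) * coeff r (↑(u ^ m) : R⟦X⟧) := by
  have euler : (r : R) * coeff r (↑(u ^ m) : R⟦X⟧) =
      m * coeff r (X * ((↑(u ^ (m - 1)) : R⟦X⟧) * d⁄dX R ↑u)) := by
    rw [← coeff_X_mul_derivative, Derivation.leibniz_val_zpow, smul_eq_mul, ← coeff_C_mul,
      map_intCast]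
    congr 1
    ring
  rw [val_zpow_sub_one_mul_derivative_X_mul, map_add]
  linear_combination -euler

variable [IsAddTorsionFree R]

theorem coeff_zpow_neg_sub_one_mul_derivative_X_mul (u : R⟦X⟧ˣ) (r : ℕ) :
    coeff r ((↑(u ^ (-r - 1 : ℤ)) : R⟦X⟧) * d⁄dX R (X * (u : R⟦X⟧))) =
      if r = 0 then 1 else 0 := by
  rcases r.eq_zero_or_pos with rfl | hr
  · rw [val_zpow_sub_one_mul_derivative_X_mul]
    simp
  · have h := coeff_zpow_sub_one_mul_derivative_X_mul u (-r) r
    rw [if_neg hr.ne']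
    push_cast at h
    rw [neg_add_cancel, zero_mul, neg_mul, neg_eq_zero, ← nsmul_eq_mul] at h
    exact (smul_eq_zero.mp h).resolve_left hr.ne'

theorem coeff_X_mul_pow_mul_zpow_neg_sub_one_mul_derivative_X_mul (u : R⟦X⟧ˣ) (i j : ℕ) :
    coeff j ((X * (u : R⟦X⟧)) ^ i *
      ((↑(u ^ (-j - 1 : ℤ)) : R⟦X⟧) * d⁄dX R (X * (u : R⟦X⟧)))) = if i = j then 1 else 0 := by
  rw [mul_pow, mul_assoc, ← mul_assoc ((u : R⟦X⟧) ^ i), ← Units.val_pow_eq_pow_val,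
    ← zpow_natCast, ← Units.val_mul, ← zpow_add, coeff_X_pow_mul']
  by_cases hij : i ≤ j
  · have hexp : (i : ℤ) + (-j - 1) = -↑(j - i) - 1 := by omega
    rw [if_pos hij, hexp, coeff_zpow_neg_sub_one_mul_derivative_X_mul]
    exact if_congr (by omega) rfl rfl
  · rw [if_neg hij, if_neg (by omega)]

theorem coeff_subst_X_mul_mul_zpow_neg_sub_one_mul_derivative_X_mul (u : R⟦X⟧ˣ) (A : R⟦X⟧)
    (j : ℕ) :
    coeff j (A.subst (X * (u : R⟦X⟧)) *
      ((↑(u ^ (-j - 1 : ℤ)) : R⟦X⟧) * d⁄dX R (X * (u : R⟦X⟧)))) = coeff j A := by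
  have hw : HasSubst (X * (u : R⟦X⟧)) := HasSubst.of_constantCoeff_zero' (by simp)
  nth_rewrite 1 [eq_X_pow_mul_shift_add_trunc (j + 1) A]
  rw [subst_add hw, subst_mul hw, subst_pow hw, subst_X hw, subst_coe hw,
    Polynomial.aeval_eq_sum_range' (natDegree_trunc_lt A j), add_mul, map_add, mul_assoc,
    mul_pow, mul_assoc, coeff_X_pow_mul', if_neg (by omega), zero_add, Finset.sum_mul, map_sum]
  simp only [smul_mul_assoc, coeff_smul, smul_eq_mul,
    coeff_X_mul_pow_mul_zpow_neg_sub_one_mul_derivative_X_mul, coeff_trunc, mul_ite, mul_one,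
    mul_zero]
  simp

theorem lagrange_inversion_of_subst_eq {u v : R⟦X⟧ˣ}
    (h : (v : R⟦X⟧).subst (X * (u : R⟦X⟧)) = u) (m : ℤ) (n : ℕ) :
    (m + n) * coeff n (↑(u ^ m) : R⟦X⟧) = m * coeff n (↑(v ^ (m + n)) : R⟦X⟧) := by
  have hw : HasSubst (X * (u : R⟦X⟧)) := HasSubst.of_constantCoeff_zero' (by simp)
  have hpow : (↑(v ^ (m + n)) : R⟦X⟧).subst (X * (u : R⟦X⟧)) = ↑(u ^ (m + n)) := by
    rw [← coe_substAlgHom hw] at h ⊢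
    exact map_val_zpow_of_map_val_eq h _
  rw [← coeff_subst_X_mul_mul_zpow_neg_sub_one_mul_derivative_X_mul u (↑(v ^ (m + n))) n, hpow,
    ← mul_assoc, ← Units.val_mul, ← zpow_add, show m + n + (-n - 1) = m - 1 by ring,
    coeff_zpow_sub_one_mul_derivative_X_mul]

end PowerSeries

theorem compPS_eq_subst {H : ℚ⟦X⟧} (hH : constantCoeff H = 0) (G : ℚ⟦X⟧) :
    compPS G H = G.subst H := by
  ext n
  rw [coeff_subst' (HasSubst.of_constantCoeff_zero' hH), compPS, coeff_mk, map_sum,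
    finsum_eq_sum_of_support_subset _ (s := Finset.range (n + 1))]
  · simp
  · intro k hk
    by_contra hkn
    refine hk ?_
    show coeff k G • coeff n (H ^ k) = 0
    rw [X_pow_dvd_iff.mp (pow_dvd_pow_of_dvd (X_dvd_iff.mpr hH) k) n (by simp at hkn; omega),
      smul_zero]

/-- **Lagrange inversion** (Lemma `lagrangeinversion`).  If `F(t) = G(t F(t))` with
`G(0) ≠ 0`, then for all integers `k, d` we have
`(k+d)·[t^d] F(t)^k = k·[t^d] G(t)^{k+d}`, where for negative exponents the powers are
taken in the field of formal Laurent series. -/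
theorem lagrange_inversion (F G : PowerSeries ℚ)
    (hG : PowerSeries.constantCoeff G ≠ 0)
    (h : F = compPS G (PowerSeries.X * F)) (k d : ℤ) :
    ((k : ℚ) + d) * (((HahnSeries.ofPowerSeries ℤ ℚ F : LaurentSeries ℚ) ^ k).coeff d)
      = (k : ℚ) * (((HahnSeries.ofPowerSeries ℤ ℚ G : LaurentSeries ℚ) ^ (k + d)).coeff d) := by
  have hF : constantCoeff F = constantCoeff G := by
    conv_lhs => rw [h]
    simp [compPS]
  rw [compPS_eq_subst (by simp)] at h
  obtain ⟨v, rfl⟩ := isUnit_iff_constantCoeff.mpr hG.isUnit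
  obtain ⟨u, rfl⟩ := isUnit_iff_constantCoeff.mpr (hF ▸ hG).isUnit
  rw [← HahnSeries.ofPowerSeries_val_zpow, ← HahnSeries.ofPowerSeries_val_zpow,
    PowerSeries.coeff_coe, PowerSeries.coeff_coe]
  split_ifs with hd
  · simp
  lift d to ℕ using not_lt.mp hd
  exact_mod_cast lagrange_inversion_of_subst_eq h.symm k d
end

section
/- For all d ∈ ℕ and all integers c_i (i ≥ 1), the coefficient of t^d in ∏_{i≥1}(1-t^i)^{-c_i} equals the sum over all partitions λ of d of ∏_{i≥1} binom(c_i + λ_i - λ_{i+1} - 1, λ_i - λ_{i+1}). -/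
open PowerSeries

/-- `(1 + u)^q` for a power series `u` with zero constant term and `q : ℚ`,
defined coefficientwise via the binomial series, with
`qbinom q k = q(q-1)⋯(q-k+1)/k!`. -/
noncomputable def qbinom (q : ℚ) (k : ℕ) : ℚ :=
  (∏ j ∈ Finset.range k, (q - (j : ℚ))) / (k.factorial : ℚ)

noncomputable def onePlusPow (u : PowerSeries ℚ) (q : ℚ) : PowerSeries ℚ :=
  PowerSeries.mk fun n =>
    PowerSeries.coeff n (∑ k ∈ Finset.range (n + 1), qbinom q k • u ^ k)

/-- The infinite product `∏_{i ≥ 1} g i`, defined coefficientwise. -/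
noncomputable def prodTail (g : ℕ → PowerSeries ℚ) : PowerSeries ℚ :=
  PowerSeries.mk fun n => PowerSeries.coeff n (∏ i ∈ Finset.Icc 1 n, g i)

/-- Generalized binomial coefficient `binom(a, b) = a(a-1)⋯(a-b+1)/b!` for `a : ℤ`,
`b : ℕ`; for negative `a` it is given by `binom(a,b) = (-1)^b binom(b-1-a, b)`. -/
def zbinom (a : ℤ) (b : ℕ) : ℤ :=
  if 0 ≤ a then (a.toNat.choose b : ℤ)
  else (-1) ^ b * (((b : ℤ) - 1 - a).toNat.choose b : ℤ)

open scoped Classical in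
/-- The (finite) set of partitions `λ` of `e`, encoded as functions `l : ℕ → ℕ` with
`l (i-1) = λᵢ` (so `l 0 = λ₁`), antitone and summing to `e`; all parts beyond index
`e+2` vanish automatically. -/
noncomputable def partitionFinset (e : ℕ) : Finset (ℕ → ℕ) :=
  (Finset.univ.filter fun l : Fin (e + 2) → Fin (e + 1) =>
      (∀ i j, i ≤ j → l j ≤ l i) ∧ ∑ i, (l i : ℕ) = e).image
    fun l n => if h : n < e + 2 then (l ⟨n, h⟩ : ℕ) else 0

/-!
Expanding `(1 - t^j)^{-c_j} = ∑_m binom(c_j + m - 1, m) t^{jm}`, the coefficient of `t^d` is a sum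
over multiplicity vectors `(m_j)` with `∑ j m_j = d`. These correspond bijectively to the
partitions `λ ⊢ d` via `m_j = λ_j - λ_{j+1}`, the number of parts of `λ` equal to `j`, and
`λ_k = ∑_{j ≥ k} m_j`.
-/

open Finset

lemma qbinom_eq_choose (q : ℚ) (k : ℕ) : qbinom q k = Ring.choose q k := by
  rw [Ring.choose_eq_smul, ← Polynomial.aeval_eq_smeval, ← Polynomial.eval_map_algebraMap,
    descPochhammer_map, descPochhammer_eval_eq_prod_range, qbinom, smul_eq_mul, div_eq_inv_mul]

lemma zbinom_eq_choose (a : ℤ) (b : ℕ) : zbinom a b = Ring.choose a b := by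
  unfold zbinom
  split_ifs with ha
  · rw [← Ring.choose_natCast, Int.toNat_of_nonneg ha]
  · obtain ⟨n, hn⟩ : ∃ n : ℕ, (b : ℤ) - 1 - a = n := ⟨_, (Int.toNat_of_nonneg (by omega)).symm⟩
    rw [hn, Int.toNat_natCast, ← neg_neg a, Ring.choose_neg, show -a + b - 1 = (n : ℤ) by omega,
      Ring.choose_natCast, Units.smul_def, Int.negOnePow_def]
    rfl

lemma neg_one_pow_mul_qbinom_neg (a : ℤ) (m : ℕ) :
    (-1 : ℚ) ^ m * qbinom (-(a : ℚ)) m = (zbinom (a + m - 1) m : ℚ) := by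
  have hcast := Ring.map_choose (Int.castRingHom ℚ) (a + m - 1) m
  rw [eq_intCast, eq_intCast] at hcast
  rw [qbinom_eq_choose, zbinom_eq_choose, hcast, Ring.choose_neg, Units.smul_def, zsmul_eq_mul,
    Int.cast_negOnePow_natCast, ← mul_assoc, ← mul_pow, neg_one_mul, neg_neg, one_pow, one_mul]
  norm_cast

lemma coeff_onePlusPow_neg_X_pow {i : ℕ} (hi : 0 < i) (q : ℚ) (n : ℕ) :
    coeff n (onePlusPow (-(X ^ i)) q) =
      if i ∣ n then (-1) ^ (n / i) * qbinom q (n / i) else 0 := by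
  have hterm (k : ℕ) : coeff n (qbinom q k • (-(X ^ i) : ℚ⟦X⟧) ^ k) =
      if n = i * k then (-1) ^ k * qbinom q k else 0 := by
    rw [neg_pow, ← pow_mul, show (-1 : ℚ⟦X⟧) ^ k = C ((-1) ^ k) by simp, map_smul,
      coeff_C_mul_X_pow]
    split_ifs <;> simp [mul_comm]
  rw [onePlusPow, coeff_mk, map_sum, sum_congr rfl fun k _ => hterm k]
  split_ifs with hdvd
  · obtain ⟨m, rfl⟩ := hdvd
    simp_rw [Nat.mul_left_cancel_iff hi, Nat.mul_div_cancel_left m hi]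
    rw [sum_ite_eq, if_pos (mem_range.mpr (by nlinarith))]
  · exact sum_eq_zero fun k _ => if_neg fun h => hdvd ⟨k, h⟩

lemma succ_mul_le_sum_range_of_antitone {p : ℕ → ℕ} (hp : Antitone p) (k : ℕ) :
    (k + 1) * p k ≤ ∑ i ∈ range (k + 1), p i := by
  simpa using card_nsmul_le_sum (range (k + 1)) p (p k)
    fun i hi => hp (Nat.lt_succ_iff.mp (mem_range.mp hi))

lemma eq_zero_of_antitone_of_sum_range_eq {p : ℕ → ℕ} (hp : Antitone p) {e N : ℕ} (heN : e < N)
    (hsum : ∑ i ∈ range N, p i = e) {n : ℕ} (hn : e ≤ n) : p n = 0 := by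
  have hle : ∑ i ∈ range (e + 1), p i ≤ e :=
    (sum_le_sum_of_subset (range_subset_range.mpr heN)).trans hsum.le
  have he : p e = 0 := by nlinarith [succ_mul_le_sum_range_of_antitone hp e]
  exact Nat.eq_zero_of_le_zero (he ▸ hp hn)

lemma mem_partitionFinset_iff {e : ℕ} {p : ℕ → ℕ} :
    p ∈ partitionFinset e ↔
      Antitone p ∧ (∀ n, e ≤ n → p n = 0) ∧ ∑ i ∈ range e, p i = e := by
  have hsum_two (hzero : ∀ n, e ≤ n → p n = 0) :
      ∑ i ∈ range (e + 2), p i = ∑ i ∈ range e, p i := by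
    rw [sum_range_succ, sum_range_succ, hzero e le_rfl, hzero (e + 1) (by omega), add_zero,
      add_zero]
  simp only [partitionFinset, mem_image, mem_filter, mem_univ, true_and]
  constructor
  · rintro ⟨l, ⟨hl, hsum⟩, rfl⟩
    have hanti : Antitone fun n => if h : n < e + 2 then (l ⟨n, h⟩ : ℕ) else 0 := by
      intro i j hij
      by_cases hj : j < e + 2
      · simp only [hj, lt_of_le_of_lt hij hj, dif_pos]
        exact hl ⟨i, _⟩ ⟨j, hj⟩ hij
      · simp [hj]
    have hsum' : ∑ n ∈ range (e + 2), (if h : n < e + 2 then (l ⟨n, h⟩ : ℕ) else 0) = e := by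
      rw [← Fin.sum_univ_eq_sum_range (fun n => if h : n < e + 2 then (l ⟨n, h⟩ : ℕ) else 0)]
      simpa using hsum
    have hzero := fun n => eq_zero_of_antitone_of_sum_range_eq hanti (by omega) hsum' (n := n)
    exact ⟨hanti, hzero, hsum_two hzero ▸ hsum'⟩
  · rintro ⟨hanti, hzero, hsum⟩
    have hp0 : p 0 ≤ e :=
      calc p 0 ≤ ∑ i ∈ range (e + 1), p i := single_le_sum (by simp) (by simp)
        _ = e := by rw [sum_range_succ, hzero e le_rfl, add_zero, hsum]
    refine ⟨fun i => ⟨p i, Nat.lt_succ_of_le ((hanti (Nat.zero_le _)).trans hp0)⟩, ⟨?_, ?_⟩, ?_⟩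
    · exact fun i j hij => hanti hij
    · calc ∑ i : Fin (e + 2), p i = ∑ i ∈ range (e + 2), p i := Fin.sum_univ_eq_sum_range p _
        _ = e := by rw [hsum_two hzero, hsum]
    · funext n
      split_ifs with hn
      · rfl
      · exact (hzero n (by omega)).symm

lemma sum_range_sum_Ioc_eq_sum_Icc_nsmul {M : Type*} [AddCommMonoid M] (d : ℕ) (g : ℕ → M) :
    ∑ k ∈ range d, ∑ j ∈ Ioc k d, g j = ∑ j ∈ Icc 1 d, j • g j := by
  rw [sum_comm' (t' := Icc 1 d) (s' := range)]
  · simp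
  · intro k j
    simp only [mem_range, mem_Ioc, mem_Icc]
    omega

lemma sum_Ioc_tsub_of_antitone {p : ℕ → ℕ} (hp : Antitone p) {k n : ℕ} (hkn : k ≤ n) :
    ∑ j ∈ Ioc k n, (p (j - 1) - p j) = p k - p n := by
  induction n, hkn using Nat.le_induction with
  | base => simp
  | succ n hkn ih =>
    rw [sum_Ioc_succ_top hkn, ih, Nat.add_sub_cancel]
    have := hp (Nat.le_add_right n 1)
    have := hp hkn
    omega

-- `p (j - 1) - p j` is the number of parts of the partition `p` equal to `j`.
noncomputable def partitionToExponents (d : ℕ) (p : ℕ → ℕ) : ℕ →₀ ℕ :=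
  Finsupp.onFinset (Icc 1 d) (fun j => if j ∈ Icc 1 d then j * (p (j - 1) - p j) else 0)
    fun _ hj => by_contra fun h => hj (if_neg h)

def exponentsToPartition (d : ℕ) (f : ℕ → ℕ) (k : ℕ) : ℕ :=
  ∑ j ∈ Ioc k d, f j / j

lemma partitionToExponents_apply {d j : ℕ} (p : ℕ → ℕ) (hj : j ∈ Icc 1 d) :
    partitionToExponents d p j = j * (p (j - 1) - p j) := by
  simp only [partitionToExponents, Finsupp.onFinset_apply, if_pos hj]

lemma partitionToExponents_apply_div {d j : ℕ} (p : ℕ → ℕ) (hj : j ∈ Icc 1 d) :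
    partitionToExponents d p j / j = p (j - 1) - p j := by
  rw [partitionToExponents_apply p hj, Nat.mul_div_cancel_left _ (mem_Icc.mp hj).1]

lemma exponentsToPartition_sub_one {d j : ℕ} (f : ℕ → ℕ) (hj : j ∈ Icc 1 d) :
    exponentsToPartition d f (j - 1) = f j / j + exponentsToPartition d f j := by
  have hIoc : Ioc (j - 1) d = insert j (Ioc j d) := by
    ext i
    simp only [mem_Ioc, mem_insert]
    have := mem_Icc.mp hj
    omega
  rw [exponentsToPartition, exponentsToPartition, hIoc, sum_insert left_notMem_Ioc]

def dvdAntidiag (d : ℕ) : Finset (ℕ →₀ ℕ) :=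
  (finsuppAntidiag (Icc 1 d) d).filter fun f => ∀ j ∈ Icc 1 d, j ∣ f j

lemma mem_dvdAntidiag {d : ℕ} {f : ℕ →₀ ℕ} :
    f ∈ dvdAntidiag d ↔ (∑ j ∈ Icc 1 d, f j = d ∧ f.support ⊆ Icc 1 d) ∧
      ∀ j ∈ Icc 1 d, j ∣ f j := by
  rw [dvdAntidiag, mem_filter, mem_finsuppAntidiag]

section Bijection

variable {d : ℕ}

lemma exponentsToPartition_mem_partitionFinset {f : ℕ →₀ ℕ} (hf : f ∈ dvdAntidiag d) :
    exponentsToPartition d f ∈ partitionFinset d := by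
  obtain ⟨⟨hsum, -⟩, hdvd⟩ := mem_dvdAntidiag.mp hf
  refine mem_partitionFinset_iff.mpr ⟨fun i j hij => ?_, fun n hn => ?_, ?_⟩
  · exact sum_le_sum_of_subset (Ioc_subset_Ioc_left hij)
  · rw [exponentsToPartition, Ioc_eq_empty_of_le hn, sum_empty]
  · simp_rw [exponentsToPartition]
    rw [sum_range_sum_Ioc_eq_sum_Icc_nsmul]
    exact (sum_congr rfl fun j hj => Nat.mul_div_cancel' (hdvd j hj)).trans hsum

lemma partitionToExponents_mem_dvdAntidiag {p : ℕ → ℕ} (hp : p ∈ partitionFinset d) :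
    partitionToExponents d p ∈ dvdAntidiag d := by
  obtain ⟨hanti, hzero, hsum⟩ := mem_partitionFinset_iff.mp hp
  refine mem_dvdAntidiag.mpr ⟨⟨?_, Finsupp.support_onFinset_subset⟩,
    fun j hj => ⟨_, partitionToExponents_apply p hj⟩⟩
  calc ∑ j ∈ Icc 1 d, partitionToExponents d p j
      = ∑ j ∈ Icc 1 d, j • (p (j - 1) - p j) :=
        sum_congr rfl fun j hj => partitionToExponents_apply p hj
    _ = ∑ k ∈ range d, (p k - p d) := by
        rw [← sum_range_sum_Ioc_eq_sum_Icc_nsmul]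
        exact sum_congr rfl fun k hk =>
          sum_Ioc_tsub_of_antitone hanti (mem_range.mp hk).le
    _ = d := by simp [hzero d le_rfl, hsum]

lemma exponentsToPartition_partitionToExponents {p : ℕ → ℕ} (hp : p ∈ partitionFinset d) :
    exponentsToPartition d (partitionToExponents d p) = p := by
  obtain ⟨hanti, hzero, -⟩ := mem_partitionFinset_iff.mp hp
  funext k
  rcases le_or_gt k d with hk | hk
  · rw [exponentsToPartition, sum_congr rfl fun j hj => partitionToExponents_apply_div p
      (by have := mem_Ioc.mp hj; exact mem_Icc.mpr (by omega)),
      sum_Ioc_tsub_of_antitone hanti hk, hzero d le_rfl, Nat.sub_zero]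
  · rw [exponentsToPartition, Ioc_eq_empty_of_le hk.le, sum_empty, hzero k hk.le]

lemma partitionToExponents_exponentsToPartition {f : ℕ →₀ ℕ} (hf : f ∈ dvdAntidiag d) :
    partitionToExponents d (exponentsToPartition d f) = f := by
  obtain ⟨⟨-, hsupp⟩, hdvd⟩ := mem_dvdAntidiag.mp hf
  ext j
  by_cases hj : j ∈ Icc 1 d
  · rw [partitionToExponents_apply _ hj, exponentsToPartition_sub_one f hj, Nat.add_sub_cancel,
      Nat.mul_div_cancel' (hdvd j hj)]
  · simp only [partitionToExponents, Finsupp.onFinset_apply, if_neg hj]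
    exact (Finsupp.notMem_support_iff.mp (hsupp.mt hj)).symm

end Bijection

theorem sum_dvdAntidiag_eq_sum_partitionFinset {R : Type*} [CommSemiring R] (F : ℕ → ℕ → R)
    (hF : ∀ j, F j 0 = 1) (d : ℕ) :
    ∑ f ∈ dvdAntidiag d, ∏ j ∈ Icc 1 d, F j (f j / j) =
      ∑ p ∈ partitionFinset d, ∏ i ∈ range (d + 1), F (i + 1) (p i - p (i + 1)) := by
  refine (sum_nbij' (partitionToExponents d) (fun f => exponentsToPartition d f)
    (fun _ => partitionToExponents_mem_dvdAntidiag)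
    (fun _ => exponentsToPartition_mem_partitionFinset)
    (fun _ => exponentsToPartition_partitionToExponents)
    (fun _ => partitionToExponents_exponentsToPartition) fun p hp => ?_).symm
  obtain ⟨-, hzero, -⟩ := mem_partitionFinset_iff.mp hp
  calc ∏ i ∈ range (d + 1), F (i + 1) (p i - p (i + 1))
      = ∏ i ∈ range d, F (1 + i) (p (1 + i - 1) - p (1 + i)) := by
        rw [prod_range_succ, hzero d le_rfl, Nat.zero_sub, hF, mul_one]
        exact prod_congr rfl fun i _ => by rw [add_comm 1 i, Nat.add_sub_cancel]
    _ = ∏ j ∈ Icc 1 d, F j (partitionToExponents d p j / j) := by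
        rw [← Ico_add_one_right_eq_Icc, prod_Ico_eq_prod_range, Nat.add_sub_cancel]
        exact prod_congr rfl fun i hi => by
          rw [partitionToExponents_apply_div p (by have := mem_range.mp hi; simp; omega)]

/-- (Lemma `coeffpartition`.)  For all `d ∈ ℕ` and integers `cᵢ` (`i ≥ 1`), the
`t^d`-coefficient of `∏_{i≥1} (1-t^i)^{-cᵢ}` equals
`∑_{λ ⊢ d} ∏_{i≥1} binom(cᵢ + λᵢ - λ_{i+1} - 1, λᵢ - λ_{i+1})`. -/
theorem coeff_euler_product_partitions (c : ℕ → ℤ) (d : ℕ) :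
    PowerSeries.coeff d
        (prodTail fun i => onePlusPow (-(PowerSeries.X ^ i)) (-(c i : ℚ)))
      = ∑ l ∈ partitionFinset d, ∏ i ∈ Finset.range (d + 1),
          ((zbinom (c (i + 1) + (l i : ℤ) - (l (i + 1) : ℤ) - 1) (l i - l (i + 1)) : ℤ) : ℚ) := by
  have hfactor (j : ℕ) (hj : j ∈ Icc 1 d) (n : ℕ) :
      coeff n (onePlusPow (-(X ^ j)) (-(c j : ℚ))) =
        if j ∣ n then ((zbinom (c j + (n / j : ℕ) - 1) (n / j) : ℤ) : ℚ) else 0 := by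
    rw [coeff_onePlusPow_neg_X_pow (mem_Icc.mp hj).1, neg_one_pow_mul_qbinom_neg]
  have hdvd (f : ℕ →₀ ℕ) :
      ∏ j ∈ Icc 1 d, coeff (f j) (onePlusPow (-(X ^ j)) (-(c j : ℚ))) ≠ 0 →
        ∀ j ∈ Icc 1 d, j ∣ f j := fun hne j hj =>
    by_contra fun h => hne (prod_eq_zero hj ((hfactor j hj (f j)).trans (if_neg h)))
  rw [prodTail, coeff_mk, coeff_prod, ← sum_filter_of_ne fun f _ => hdvd f]
  change ∑ f ∈ dvdAntidiag d, _ = _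
  rw [sum_congr rfl fun f hf => prod_congr rfl fun j hj =>
      (hfactor j hj (f j)).trans (if_pos ((mem_dvdAntidiag.mp hf).2 j hj)),
    sum_dvdAntidiag_eq_sum_partitionFinset (fun j m => ((zbinom (c j + m - 1) m : ℤ) : ℚ))
      (fun j => by rw [zbinom_eq_choose, Ring.choose_zero_right, Int.cast_one])]
  refine sum_congr rfl fun l hl => prod_congr rfl fun i _ => ?_
  rw [Nat.cast_sub ((mem_partitionFinset_iff.mp hl).1 i.le_succ), ← add_sub_assoc]
end

section
/- For integers a ∈ ℤ and b ≥ 0 with 2 | a and 2 | b, the congruence binom(a,b) ≡ binom(a/2, b/2) (mod 4) holds. -/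
private lemma even2 (m j : ℕ) : 2 ∣ Nat.choose (2*m) (2*j+1) := by
  haveI : Fact (Nat.Prime 2) := ⟨Nat.prime_two⟩
  have h := Choose.choose_modEq_choose_mod_mul_choose_div_nat (p := 2) (n := 2*m) (k := 2*j+1)
  have e1 : (2*m) % 2 = 0 := by omega
  have e2 : (2*j+1) % 2 = 1 := by omega
  rw [e1, e2] at h
  simp only [Nat.choose_zero_succ, zero_mul] at h
  exact (Nat.modEq_zero_iff_dvd.mp h)

private lemma odd2 (M j : ℕ) :
    Nat.choose (2*M+1) (2*j+1) ≡ Nat.choose M j [MOD 2] := by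
  haveI : Fact (Nat.Prime 2) := ⟨Nat.prime_two⟩
  have h := Choose.choose_modEq_choose_mod_mul_choose_div_nat (p := 2) (n := 2*M+1) (k := 2*j+1)
  have e1 : (2*M+1) % 2 = 1 := by omega
  have e2 : (2*j+1) % 2 = 1 := by omega
  have e3 : (2*M+1) / 2 = M := by omega
  have e4 : (2*j+1) / 2 = j := by omega
  rw [e1, e2, e3, e4] at h
  simpa using h

private lemma h4 : (4 : ZMod 4) = 0 := rfl

private lemma L1 (m : ℕ) : ∀ n : ℕ,
    ((Nat.choose (2*m) (2*n) : ℕ) : ZMod 4) = ((Nat.choose m n : ℕ) : ZMod 4) := by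
  induction m with
  | zero =>
    intro n
    cases n with
    | zero => simp
    | succ n => rw [Nat.choose_eq_zero_of_lt (by omega), Nat.choose_eq_zero_of_lt (by omega)]
  | succ m ih =>
    intro n
    cases n with
    | zero => simp
    | succ n =>
      rw [show 2*(m+1) = 2*m+1+1 by ring, show 2*(n+1) = 2*n+1+1 by ring,
        Nat.choose_succ_succ (2*m+1) (2*n+1), Nat.choose_succ_succ (2*m) (2*n),
        Nat.choose_succ_succ (2*m) (2*n+1)]
      simp only [Nat.succ_eq_add_one]
      obtain ⟨k, hk⟩ := even2 m n
      rw [hk, show 2*n+1+1 = 2*(n+1) by ring, Nat.choose_succ_succ m n]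
      push_cast
      rw [ih n, ih (n+1)]
      linear_combination (k : ZMod 4) * h4

private lemma L2 (M : ℕ) : ∀ n : ℕ,
    ((Nat.choose (2*M+1) (2*n) : ℕ) : ZMod 4) = (-1)^n * ((Nat.choose M n : ℕ) : ZMod 4) := by
  induction M with
  | zero =>
    intro n
    cases n with
    | zero => simp
    | succ n =>
      rw [Nat.choose_eq_zero_of_lt (by omega)]
      simp
  | succ M ih =>
    intro n
    cases n with
    | zero => simp
    | succ n =>
      rw [show 2*(M+1)+1 = 2*M+1+1+1 by ring, show 2*(n+1) = 2*n+1+1 by ring,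
        Nat.choose_succ_succ (2*M+1+1) (2*n+1), Nat.choose_succ_succ (2*M+1) (2*n),
        Nat.choose_succ_succ (2*M+1) (2*n+1)]
      simp only [Nat.succ_eq_add_one]
      rw [show 2*n+1+1 = 2*(n+1) by ring, Nat.choose_succ_succ M n]
      have hm : ((Nat.choose (2*M+1) (2*n+1) : ℕ) : ZMod 4)
          + ((Nat.choose (2*M+1) (2*n+1) : ℕ) : ZMod 4)
          = 2 * ((Nat.choose M n : ℕ) : ZMod 4) := by
        have h2 : ((2 * Nat.choose (2*M+1) (2*n+1) : ℕ) : ZMod 4)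
            = ((2 * Nat.choose M n : ℕ) : ZMod 4) :=
          (ZMod.natCast_eq_natCast_iff _ _ _).mpr
            ((show (2:ℕ)*2 = 4 from rfl) ▸ ((odd2 M n).mul_left' 2))
        push_cast at h2
        linear_combination h2
      push_cast
      push_cast at hm
      rw [ih n, ih (n+1)]
      rcases Nat.even_or_odd n with h | h
      · rw [h.neg_one_pow, h.add_one.neg_one_pow]
        linear_combination hm + ((Nat.choose M n : ℕ) : ZMod 4) * h4
      · rw [h.neg_one_pow, h.add_one.neg_one_pow]
        linear_combination hm

/-- (Part of Lemma `gessel`, case `p = 2`.)  For integers `a` and `b ≥ 0` both divisible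
by `2`, `binom(a, b) ≡ binom(a/2, b/2) (mod 4)`. -/
theorem zbinom_half_mod_four (a : ℤ) (b : ℕ) (ha : 2 ∣ a) (hb : 2 ∣ b) :
    zbinom a b ≡ zbinom (a / 2) (b / 2) [ZMOD 4] := by
  obtain ⟨m, rfl⟩ := ha
  obtain ⟨n, rfl⟩ := hb
  have hb2 : 2 * n / 2 = n := by omega
  have ha2 : (2 * m) / 2 = m := by omega
  rw [ha2, hb2, show (4:ℤ) = ((4:ℕ):ℤ) by norm_num, ← ZMod.intCast_eq_intCast_iff]
  by_cases hm : 0 ≤ m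
  · lift m to ℕ using hm with k
    have h0 : (0:ℤ) ≤ 2 * k := by positivity
    simp only [zbinom, if_pos h0, if_pos (show (0:ℤ) ≤ (k:ℤ) by positivity)]
    have e1 : ((2:ℤ) * k).toNat = 2 * k := by omega
    have e2 : ((k:ℤ)).toNat = k := by omega
    rw [e1, e2]
    push_cast
    exact L1 k n
  · push_neg at hm
    have h0 : ¬ (0:ℤ) ≤ 2 * m := by omega
    simp only [zbinom, if_neg h0, if_neg (not_le.mpr hm)]
    obtain ⟨k, rfl⟩ : ∃ k : ℕ, m = -1 - k := ⟨(-1 - m).toNat, by omega⟩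
    have e1 : (((2*n : ℕ):ℤ) - 1 - 2*(-1 - (k:ℤ))).toNat = 2*(n+k)+1 := by
      push_cast; omega
    have e2 : (((n : ℕ):ℤ) - 1 - (-1 - (k:ℤ))).toNat = n + k := by omega
    rw [e1, e2]
    push_cast
    rw [(show Even (2*n) from ⟨n, by ring⟩).neg_one_pow, one_mul]
    exact L2 (n+k) n
end

section
/- Let p be a prime dividing e ≥ 1, let b_i ∈ ℤ for i ≥ 1, and let λ be a partition of e such that some part λ_i is not divisible by p. Then p^{2·v_p(e)} divides ∏_{i≥1} binom(i·b_i·e, λ_i - λ_{i+1}). -/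
lemma zbinom_succ (a : ℤ) (k : ℕ) : ((k:ℤ)+1) * zbinom a (k+1) = a * zbinom (a-1) k := by
  unfold zbinom
  rcases lt_trichotomy a 0 with h | h | h
  · rw [if_neg (by omega), if_neg (by omega)]
    have hN : (((k:ℕ)+1 : ℕ) : ℤ) - 1 - a = (k:ℤ) - 1 - (a-1) := by push_cast; ring
    rw [hN]
    set N := ((k:ℤ) - 1 - (a-1)).toNat with hNdef
    have hNk : (N : ℤ) = (k:ℤ) - a := by
      rw [hNdef, Int.toNat_of_nonneg (by omega)]; ring
    have hsub : ((N - k : ℕ) : ℤ) = -a := by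
      rw [Nat.cast_sub (by omega)]; omega
    have keyZ : ((N.choose (k+1) : ℤ)) * ((k:ℤ)+1) = (N.choose k : ℤ) * (-a) := by
      have h1 := congrArg (Nat.cast (R := ℤ)) (Nat.choose_succ_right_eq N k)
      rw [Nat.cast_mul, Nat.cast_mul, hsub] at h1
      exact_mod_cast h1
    push_cast
    rw [pow_succ]
    linear_combination (-(-1:ℤ)^k) * keyZ
  · subst h; simp
  · rw [if_pos (by omega), if_pos (by omega)]
    have ha : a.toNat = (a-1).toNat + 1 := by omega
    rw [ha]
    have key := Nat.add_one_mul_choose_eq ((a-1).toNat) k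
    have keyZ : (((a-1).toNat : ℤ) + 1) * ((a-1).toNat.choose k : ℤ) = (((a-1).toNat+1).choose (k+1) : ℤ) * ((k:ℤ)+1) := by exact_mod_cast key
    have ha' : ((a-1).toNat : ℤ) = a - 1 := Int.toNat_of_nonneg (by omega)
    rw [ha'] at keyZ
    linarith [keyZ]

lemma zbinom_dvd (p : ℕ) (hp : p.Prime) (a : ℤ) (k : ℕ) (hk : k ≠ 0) (s : ℕ)
    (ha : (p:ℤ)^s ∣ a) : (p:ℤ)^(s - padicValNat p k) ∣ zbinom a k := by
  set t := padicValNat p k with ht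
  rcases le_or_gt s t with hst | hst
  · rw [Nat.sub_eq_zero_of_le hst]; simp
  obtain ⟨k', rfl⟩ : ∃ k', k = k' + 1 := ⟨k - 1, by omega⟩
  have hdvd : (p:ℤ)^s ∣ ((k':ℤ)+1) * zbinom a (k'+1) := by
    rw [zbinom_succ a k']; exact Dvd.dvd.mul_right ha _
  set u : ℕ := (k'+1) / p ^ ((k'+1).factorization p) with hu
  have hfac : (k'+1).factorization p = t := Nat.factorization_def _ hp
  have hdecomp : p ^ t * u = k' + 1 := by
    rw [hu, ← hfac]; exact Nat.ordProj_mul_ordCompl_eq_self _ p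
  have hnd : ¬ p ∣ u := by
    rw [hu]; exact Nat.not_dvd_ordCompl hp hk
  have hdvd2 : (p:ℤ)^t * (p:ℤ)^(s-t) ∣ ((p:ℤ)^t * (u:ℤ)) * zbinom a (k'+1) := by
    rw [← pow_add]
    have : t + (s - t) = s := by omega
    rw [this]
    have : ((p:ℤ)^t * (u:ℤ)) = ((k':ℤ)+1) := by exact_mod_cast congrArg (Nat.cast (R := ℤ)) hdecomp
    rw [this]; exact hdvd
  rw [mul_assoc] at hdvd2
  have hdvd3 : (p:ℤ)^(s-t) ∣ (u:ℤ) * zbinom a (k'+1) :=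
    (mul_dvd_mul_iff_left (a := (p:ℤ)^t) (pow_ne_zero t (by exact_mod_cast hp.ne_zero))).mp hdvd2
  exact (Nat.prime_iff_prime_int.mp hp).pow_dvd_of_dvd_mul_left _
    (by exact_mod_cast fun h => hnd (Int.ofNat_dvd.mp h)) hdvd3

lemma telescope (l : ℕ → ℕ) (hkle : ∀ i, l (i+1) ≤ l i) (n : ℕ) :
    (∑ i ∈ Finset.range n, (i+1) * (l i - l (i+1))) + n * l n = ∑ i ∈ Finset.range n, l i := by
  induction n with
  | zero => simp
  | succ n ih =>
    rw [Finset.sum_range_succ, Finset.sum_range_succ (f := l)]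
    have h1 := hkle n
    zify [h1] at ih ⊢
    linear_combination ih

/-- (Lemma `claim2`.)  Let `p` be a prime dividing `e ≥ 1`, `bᵢ ∈ ℤ`, and let `λ` be a
partition of `e` (encoded as an antitone `l : ℕ → ℕ` with `l (i-1) = λᵢ`, summing to `e`,
with at most `e` parts) some part of which is not divisible by `p`.  Then
`p^{2 v_p(e)}` divides `∏_{i≥1} binom(i bᵢ e, λᵢ - λ_{i+1})` (the product truncated at
`i = e`, beyond which all factors are `1`). -/
theorem claim2_divisibility (p e : ℕ) (hp : p.Prime) (he : 1 ≤ e) (hpe : p ∣ e)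
    (b : ℕ → ℤ) (l : ℕ → ℕ) (hanti : Antitone l)
    (hsum : ∑ i ∈ Finset.range e, l i = e) (hlast : l e = 0)
    (hnd : ∃ i, ¬ p ∣ l i) :
    (p : ℤ) ^ (2 * padicValNat p e) ∣
      ∏ i ∈ Finset.range e, zbinom (((i : ℤ) + 1) * b (i + 1) * (e : ℤ)) (l i - l (i + 1)) := by
  have hfact : Fact p.Prime := ⟨hp⟩
  set m := padicValNat p e with hm
  set k : ℕ → ℕ := fun i => l i - l (i+1) with hkdef
  set f : ℕ → ℤ := fun i => zbinom (((i : ℤ) + 1) * b (i + 1) * (e : ℤ)) (l i - l (i + 1)) with hfdef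
  have hkle : ∀ i, l (i+1) ≤ l i := fun i => hanti (Nat.le_succ i)
  have hE : ∑ i ∈ Finset.range e, (i+1) * k i = e := by
    have := telescope l hkle e
    rw [hlast, hsum] at this
    simpa using this
  -- some k j is not divisible by p
  obtain ⟨j, hje, hkj⟩ : ∃ j < e, ¬ p ∣ k j := by
    by_contra hcon
    push_neg at hcon
    obtain ⟨i, hi⟩ := hnd
    apply hi
    have H : ∀ d, p ∣ l (e - d) := by
      intro d
      induction d with
      | zero => rw [Nat.sub_zero, hlast]; exact dvd_zero p
      | succ d ih =>
        rcases lt_or_ge d e with hd | hd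
        · have hlt : e - (d+1) < e := by omega
          have h2 := hcon (e - (d+1)) hlt
          have h3 : (e - (d+1)) + 1 = e - d := by omega
          have h4 := hkle (e - (d+1))
          have h5 : l (e - (d+1)) = k (e - (d+1)) + l ((e - (d+1)) + 1) := by
            simp only [hkdef]; omega
          rw [h5, h3]
          exact dvd_add h2 ih
        · have : e - (d+1) = e - d := by omega
          rw [this]; exact ih
    rcases lt_or_ge i e with hi' | hi'
    · have := H (e - i)
      rwa [show e - (e-i) = i by omega] at this
    · have : l i = 0 := Nat.le_zero.mp (hlast ▸ hanti hi')
      rw [this]; exact dvd_zero p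
  have hkj0 : k j ≠ 0 := fun h => hkj (h ▸ dvd_zero p)
  set a := padicValNat p (j+1) with hadef
  have hpem : (p:ℤ)^m ∣ (e:ℤ) := by
    have : ((p^m : ℕ) : ℤ) ∣ ((e:ℕ):ℤ) := Int.natCast_dvd_natCast.mpr pow_padicValNat_dvd
    push_cast at this; exact this
  have hpja : (p:ℤ)^a ∣ ((j:ℤ)+1) := by
    have h0 : p ^ a ∣ (j+1) := by rw [hadef]; exact pow_padicValNat_dvd
    have : ((p^a : ℕ) : ℤ) ∣ ((j+1 : ℕ) : ℤ) := Int.natCast_dvd_natCast.mpr h0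
    push_cast at this; exact this
  have hvkj : padicValNat p (k j) = 0 := padicValNat.eq_zero_of_not_dvd hkj
  have hfj : (p:ℤ)^(m + a) ∣ f j := by
    have hdvd : (p:ℤ)^(m + a) ∣ ((j:ℤ)+1) * b (j+1) * (e:ℤ) := by
      rw [pow_add, mul_comm ((p:ℤ)^m)]
      exact mul_dvd_mul (hpja.mul_right _) hpem
    have := zbinom_dvd p hp _ (k j) hkj0 (m+a) hdvd
    rwa [hvkj, Nat.sub_zero] at this
  rcases le_or_gt m a with hma | hma
  · -- single factor suffices
    calc (p:ℤ)^(2*m) ∣ (p:ℤ)^(m+a) := pow_dvd_pow _ (by omega)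
      _ ∣ f j := hfj
      _ ∣ _ := Finset.dvd_prod_of_mem f (Finset.mem_range.mpr hje)
  · -- need a second factor
    have hjke : (j+1) * k j ≤ e := by
      rw [← hE]
      exact Finset.single_le_sum (f := fun i => (i+1) * k i) (fun i _ => Nat.zero_le _)
        (Finset.mem_range.mpr hje)
    have hjkne : (j+1) * k j ≠ e := by
      intro h
      have : padicValNat p ((j+1) * k j) = a := by
        rw [padicValNat.mul (by omega) hkj0, hvkj, hadef]
        omega
      rw [h, ← hm] at this
      omega
    have hrne : ¬ p^(a+1) ∣ (e - (j+1) * k j) := by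
      intro hd
      have h1 : p^(a+1) ∣ e := dvd_trans (pow_dvd_pow p (by omega)) pow_padicValNat_dvd
      have h2 : p^(a+1) ∣ (j+1) * k j := by
        have := Nat.dvd_sub h1 hd
        rwa [Nat.sub_sub_self hjke] at this
      have h3 : a + 1 ≤ ((j+1) * k j).factorization p :=
        (hp.pow_dvd_iff_le_factorization (by positivity)).mp h2
      rw [Nat.factorization_def _ hp, padicValNat.mul (by omega) hkj0, hvkj] at h3
      omega
    obtain ⟨i, hie, hij, hi⟩ : ∃ i ∈ Finset.range e, i ≠ j ∧ ¬ p^(a+1) ∣ (i+1) * k i := by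
      by_contra hcon
      push_neg at hcon
      apply hrne
      have hsplit : (j+1) * k j + ∑ i ∈ (Finset.range e).erase j, (i+1) * k i = e := by
        rw [Finset.add_sum_erase _ (fun i => (i+1) * k i) (Finset.mem_range.mpr hje)]; exact hE
      have : ∑ i ∈ (Finset.range e).erase j, (i+1) * k i = e - (j+1) * k j := by omega
      rw [← this]
      exact Finset.dvd_sum (fun i hi => hcon i (Finset.mem_of_mem_erase hi)
        (Finset.ne_of_mem_erase hi))
    have hki0 : k i ≠ 0 := by
      intro h
      apply hi
      rw [h, Nat.mul_zero]
      exact dvd_zero _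
    set ai := padicValNat p (i+1) with haidef
    set t := padicValNat p (k i) with htdef
    have hait : ai + t ≤ a := by
      by_contra hcon
      apply hi
      calc p^(a+1) ∣ p^(ai + t) := pow_dvd_pow p (by omega)
        _ ∣ (i+1) * k i := by
            rw [pow_add]
            exact mul_dvd_mul pow_padicValNat_dvd pow_padicValNat_dvd
    have hfi : (p:ℤ)^(m - a) ∣ f i := by
      have hpia : (p:ℤ)^ai ∣ ((i:ℤ)+1) := by
        have h0 : p ^ ai ∣ (i+1) := by rw [haidef]; exact pow_padicValNat_dvd
        have : ((p^ai : ℕ) : ℤ) ∣ ((i+1 : ℕ) : ℤ) := Int.natCast_dvd_natCast.mpr h0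
        push_cast at this; exact this
      have hdvd : (p:ℤ)^(m + ai) ∣ ((i:ℤ)+1) * b (i+1) * (e:ℤ) := by
        rw [pow_add, mul_comm ((p:ℤ)^m)]
        exact mul_dvd_mul (hpia.mul_right _) hpem
      have := zbinom_dvd p hp _ (k i) hki0 (m+ai) hdvd
      exact dvd_trans (pow_dvd_pow _ (by omega)) this
    -- combine
    have hprod : ∏ x ∈ Finset.range e, f x
        = f j * (f i * ∏ x ∈ ((Finset.range e).erase j).erase i, f x) := by
      rw [Finset.mul_prod_erase _ f (Finset.mem_erase.mpr ⟨hij, hie⟩),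
        Finset.mul_prod_erase _ f (Finset.mem_range.mpr hje)]
    calc (p:ℤ)^(2*m) = (p:ℤ)^(m+a) * (p:ℤ)^(m-a) := by rw [← pow_add]; congr 1; omega
      _ ∣ f j * (f i * ∏ x ∈ ((Finset.range e).erase j).erase i, f x) :=
          mul_dvd_mul hfj (hfi.mul_right _)
      _ = _ := hprod.symm
end

section
/- Let F(t) ∈ ℚ[[t]] with F(0)=1. If F(t) = ∏_{i≥1}(1-(-t)^i)^{-i a_i}, then H(t) = -t·F(t) is the compositional inverse of the power series -t·∏_{i≥1}(1-(-t)^i)^{-i b_i}, where the b_i are defined by the functional equation F(t) = ∏_{i≥1}(1-(tF(t))^i)^{i b_i}. In particular such b_i exist and are unique. -/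
open PowerSeries

/-- The Euler product `∏_{i ≥ 1} (1 - (-t)^i)^{-i a_i}`. -/
noncomputable def eulerProd (a : ℕ → ℚ) : PowerSeries ℚ :=
  prodTail fun i => onePlusPow (-((-PowerSeries.X) ^ i)) (-((i : ℚ) * a i))

/-- The right-hand side `∏_{i ≥ 1} (1 - (t F(t))^i)^{i b_i}` of the functional equation. -/
noncomputable def funcEqProd (F : PowerSeries ℚ) (b : ℕ → ℚ) : PowerSeries ℚ :=
  prodTail fun i => onePlusPow (-((PowerSeries.X * F) ^ i)) ((i : ℚ) * b i)

namespace CompAux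
open Finset



/-- agreement of coefficients up to index `n` -/
def aeq (n : ℕ) (f g : PowerSeries ℚ) : Prop := ∀ k ≤ n, coeff k f = coeff k g

theorem aeq_refl (n : ℕ) (f : PowerSeries ℚ) : aeq n f f := fun _ _ => rfl

theorem aeq_of_eq {f g : PowerSeries ℚ} (h : f = g) (n : ℕ) : aeq n f g := by
  subst h; exact aeq_refl n f

theorem aeq_symm {n f g} (h : aeq n f g) : aeq n g f := fun k hk => (h k hk).symm

theorem aeq_trans {n} {f g h : PowerSeries ℚ} (h1 : aeq n f g) (h2 : aeq n g h) : aeq n f h :=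
  fun k hk => (h1 k hk).trans (h2 k hk)

theorem aeq_mono {m n f g} (h : aeq n f g) (hmn : m ≤ n) : aeq m f g :=
  fun k hk => h k (hk.trans hmn)

theorem eq_of_forall_aeq {f g : PowerSeries ℚ} (h : ∀ n, aeq n f g) : f = g :=
  PowerSeries.ext fun n => h n n le_rfl

theorem aeq_add {n} {f f' g g' : PowerSeries ℚ} (hf : aeq n f f') (hg : aeq n g g') :
    aeq n (f + g) (f' + g') := fun k hk => by
  simp [map_add, hf k hk, hg k hk]

theorem aeq_neg {n} {f f' : PowerSeries ℚ} (hf : aeq n f f') : aeq n (-f) (-f') := fun k hk => by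
  simp [hf k hk]

theorem aeq_smul {n} (c : ℚ) {f f' : PowerSeries ℚ} (hf : aeq n f f') :
    aeq n (c • f) (c • f') := fun k hk => by
  simp [hf k hk]

theorem aeq_mul {n} {f f' g g' : PowerSeries ℚ} (hf : aeq n f f') (hg : aeq n g g') :
    aeq n (f * g) (f' * g') := fun k hk => by
  rw [coeff_mul, coeff_mul]
  refine Finset.sum_congr rfl fun p hp => ?_
  rw [Finset.HasAntidiagonal.mem_antidiagonal] at hp
  rw [hf p.1 (le_trans (by omega) hk), hg p.2 (le_trans (by omega) hk)]

theorem aeq_pow {n} {f f' : PowerSeries ℚ} (hf : aeq n f f') (k : ℕ) :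
    aeq n (f ^ k) (f' ^ k) := by
  induction k with
  | zero => simpa using aeq_refl n 1
  | succ k ih => rw [pow_succ, pow_succ]; exact aeq_mul ih hf

theorem aeq_sum {n} {s : Finset ℕ} {f f' : ℕ → PowerSeries ℚ}
    (h : ∀ i ∈ s, aeq n (f i) (f' i)) : aeq n (∑ i ∈ s, f i) (∑ i ∈ s, f' i) := fun k hk => by
  rw [map_sum, map_sum]
  exact Finset.sum_congr rfl fun i hi => h i hi k hk

theorem aeq_prod {n} {s : Finset ℕ} {f f' : ℕ → PowerSeries ℚ}
    (h : ∀ i ∈ s, aeq n (f i) (f' i)) : aeq n (∏ i ∈ s, f i) (∏ i ∈ s, f' i) := by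
  classical
  induction s using Finset.induction_on with
  | empty => simpa using aeq_refl n 1
  | insert _ _ hx ih =>
    rw [Finset.prod_insert hx, Finset.prod_insert hx]
    exact aeq_mul (h _ (Finset.mem_insert_self _ _)) (ih fun i hi => h i (Finset.mem_insert_of_mem hi))

/-- coefficients below `k` of `f ^ k` vanish when `f` has zero constant term -/
theorem coeff_pow_eq_zero {f : PowerSeries ℚ} (hf : constantCoeff f = 0) {m k : ℕ}
    (hmk : m < k) : coeff m (f ^ k) = 0 := by
  have hdvd : (X : PowerSeries ℚ) ^ k ∣ f ^ k := pow_dvd_pow_of_dvd (X_dvd_iff.mpr hf) k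
  exact X_pow_dvd_iff.mp hdvd m hmk

/-- multiplication of zero-constant-term series raises agreement level by one -/
theorem aeq_mul_succ {n} {f f' g g' : PowerSeries ℚ} (hf0 : constantCoeff f = 0)
    (hg0 : constantCoeff g = 0) (hf : aeq n f f') (hg : aeq n g g') :
    aeq (n + 1) (f * g) (f' * g') := by
  have hf0' : constantCoeff f' = 0 := by
    rw [← coeff_zero_eq_constantCoeff_apply, ← hf 0 (Nat.zero_le n),
      coeff_zero_eq_constantCoeff_apply, hf0]
  have hg0' : constantCoeff g' = 0 := by
    rw [← coeff_zero_eq_constantCoeff_apply, ← hg 0 (Nat.zero_le n),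
      coeff_zero_eq_constantCoeff_apply, hg0]
  intro k hk
  rw [coeff_mul, coeff_mul]
  refine Finset.sum_congr rfl fun p hp => ?_
  rw [Finset.HasAntidiagonal.mem_antidiagonal] at hp
  rcases Nat.eq_zero_or_pos p.1 with h1 | h1
  · rw [h1]
    simp [coeff_zero_eq_constantCoeff_apply, hf0, hf0']
  rcases Nat.eq_zero_or_pos p.2 with h2 | h2
  · rw [h2]
    simp [coeff_zero_eq_constantCoeff_apply, hg0, hg0']
  rw [hf p.1 (by omega), hg p.2 (by omega)]


/-- partial sums of the composition -/
noncomputable def psum (m : ℕ) (G H : PowerSeries ℚ) : PowerSeries ℚ :=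
  ∑ k ∈ Finset.range m, coeff k G • H ^ k

theorem coeff_compPS (G H : PowerSeries ℚ) (n : ℕ) :
    coeff n (compPS G H) = coeff n (psum (n + 1) G H) := by
  simp [compPS, psum, coeff_mk]

theorem coeff_psum_stable {H : PowerSeries ℚ} (hH : constantCoeff H = 0)
    (G : PowerSeries ℚ) {n m m' : ℕ} (hm : n < m) (hm' : n < m') :
    coeff n (psum m G H) = coeff n (psum m' G H) := by
  have key : ∀ m'', n < m'' → coeff n (psum m'' G H) = coeff n (psum (n + 1) G H) := by
    intro m'' hm''
    unfold psum
    rw [map_sum, map_sum]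
    symm
    apply Finset.sum_subset (Finset.range_subset_range.mpr hm'')
    intro k hk hk'
    rw [Finset.mem_range, not_lt] at hk'
    rw [LinearMap.map_smul, coeff_pow_eq_zero hH (show n < k by omega), smul_zero]
  rw [key m hm, key m' hm']

theorem aeq_compPS_psum {H : PowerSeries ℚ} (hH : constantCoeff H = 0)
    (G : PowerSeries ℚ) {n m : ℕ} (hm : n < m) : aeq n (compPS G H) (psum m G H) := by
  intro k hk
  rw [coeff_compPS, coeff_psum_stable hH G (m := k + 1) (m' := m) (Nat.lt_succ_self k) (by omega)]

theorem compPS_add (f g H : PowerSeries ℚ) :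
    compPS (f + g) H = compPS f H + compPS g H := by
  ext n
  simp only [compPS, coeff_mk, map_add, add_smul, map_sum, map_add, LinearMap.map_smul]
  rw [← Finset.sum_add_distrib]

theorem compPS_smul (c : ℚ) (f H : PowerSeries ℚ) :
    compPS (c • f) H = c • compPS f H := by
  ext n
  simp only [compPS, coeff_mk, map_sum, LinearMap.map_smul, Finset.smul_sum, smul_smul,
    smul_eq_mul, mul_assoc]
  rw [← Finset.mul_sum]

theorem compPS_neg (f H : PowerSeries ℚ) : compPS (-f) H = -compPS f H := by
  have := compPS_smul (-1) f H
  simpa using this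

theorem compPS_one (H : PowerSeries ℚ) : compPS 1 H = 1 := by
  ext n
  simp only [compPS, coeff_mk, map_sum]
  rw [Finset.sum_eq_single 0 (fun k _ hk => by rw [coeff_one, if_neg hk, zero_smul, map_zero])
    (fun h => absurd (Finset.mem_range.mpr (Nat.succ_pos n)) h)]
  simp

theorem compPS_C (c : ℚ) (H : PowerSeries ℚ) : compPS (C c) H = C c := by
  have : (C c : PowerSeries ℚ) = c • 1 := by
    ext n
    simp [coeff_C, coeff_one]
  rw [this, compPS_smul, compPS_one]

theorem compPS_X {H : PowerSeries ℚ} (hH : constantCoeff H = 0) : compPS X H = H := by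
  ext n
  simp only [compPS, coeff_mk, map_sum]
  rcases Nat.eq_zero_or_pos n with h | h
  · subst h
    simp [coeff_zero_eq_constantCoeff_apply, hH]
  · rw [Finset.sum_eq_single 1]
    · simp
    · intro k hk hk1
      rw [coeff_X, if_neg hk1, zero_smul, map_zero]
    · intro h1
      simp at h1
      omega

theorem constantCoeff_compPS (G H : PowerSeries ℚ) :
    coeff 0 (compPS G H) = coeff 0 G := by
  simp [compPS, coeff_mk]

theorem constantCoeff_compPS' (G H : PowerSeries ℚ) :
    constantCoeff (compPS G H) = constantCoeff G := by
  rw [← coeff_zero_eq_constantCoeff_apply, ← coeff_zero_eq_constantCoeff_apply]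
  exact constantCoeff_compPS G H

theorem aeq_mul_left_succ {n} {H f f' : PowerSeries ℚ} (hH : constantCoeff H = 0)
    (hf : aeq n f f') : aeq (n + 1) (H * f) (H * f') := by
  intro k hk
  rw [coeff_mul, coeff_mul]
  refine Finset.sum_congr rfl fun p hp => ?_
  rw [Finset.HasAntidiagonal.mem_antidiagonal] at hp
  rcases Nat.eq_zero_or_pos p.1 with h1 | h1
  · rw [h1]; simp [coeff_zero_eq_constantCoeff_apply, hH]
  · rw [hf p.2 (by omega)]

theorem compPS_X_mul {H : PowerSeries ℚ} (hH : constantCoeff H = 0) (g : PowerSeries ℚ) :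
    compPS (X * g) H = H * compPS g H := by
  apply eq_of_forall_aeq
  intro n
  have h1 : aeq n (compPS (X * g) H) (psum (n + 2) (X * g) H) :=
    aeq_compPS_psum hH _ (by omega)
  refine aeq_trans h1 ?_
  have h2 : psum (n + 2) (X * g) H = H * psum (n + 1) g H := by
    unfold psum
    rw [Finset.mul_sum, Finset.sum_range_succ']
    simp only [coeff_succ_X_mul]
    rw [coeff_zero_eq_constantCoeff_apply, map_mul, constantCoeff_X, zero_mul, zero_smul, add_zero]
    refine Finset.sum_congr rfl fun k _ => ?_
    rw [pow_succ', mul_smul_comm]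
  rw [h2]
  exact aeq_mul (aeq_refl n H) (aeq_symm (aeq_compPS_psum hH g (by omega)))

theorem compPS_mul {H : PowerSeries ℚ} (hH : constantCoeff H = 0) (f g : PowerSeries ℚ) :
    compPS (f * g) H = compPS f H * compPS g H := by
  apply eq_of_forall_aeq
  intro n
  induction n generalizing f g with
  | zero =>
    intro k hk
    interval_cases k
    simp only [coeff_zero_eq_constantCoeff_apply, map_mul, constantCoeff_compPS']
  | succ n ih =>
    set f' := PowerSeries.mk (fun p => coeff (p + 1) f) with hf'
    set c := constantCoeff f with hc
    have hdec : f = X * f' + C c := eq_X_mul_shift_add_const f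
    have hfg : f * g = c • g + X * (f' * g) := by
      conv_lhs => rw [hdec]
      rw [add_mul, mul_assoc, smul_eq_C_mul]
      ring
    rw [hfg, compPS_add, compPS_smul, compPS_X_mul hH]
    have hrhs : compPS f H * compPS g H = c • compPS g H + H * (compPS f' H * compPS g H) := by
      conv_lhs => rw [hdec]
      rw [compPS_add, compPS_C, compPS_X_mul hH, add_mul, mul_assoc, smul_eq_C_mul]
      ring
    rw [hrhs]
    exact aeq_add (aeq_refl _ _) (aeq_mul_left_succ hH (ih f' g))

theorem compPS_zero (H : PowerSeries ℚ) : compPS 0 H = 0 := by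
  have := compPS_smul 0 0 H
  simpa using this

theorem compPS_sum (s : Finset ℕ) (f : ℕ → PowerSeries ℚ) (H : PowerSeries ℚ) :
    compPS (∑ i ∈ s, f i) H = ∑ i ∈ s, compPS (f i) H := by
  classical
  induction s using Finset.induction_on with
  | empty => simpa using compPS_zero H
  | insert _ _ hx ih => rw [Finset.sum_insert hx, Finset.sum_insert hx, compPS_add, ih]

theorem compPS_pow {H : PowerSeries ℚ} (hH : constantCoeff H = 0) (f : PowerSeries ℚ)
    (k : ℕ) : compPS (f ^ k) H = compPS f H ^ k := by
  induction k with
  | zero => simpa using compPS_one H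
  | succ k ih => rw [pow_succ, pow_succ, compPS_mul hH, ih]

theorem compPS_congr {n} {f g : PowerSeries ℚ} (hf : aeq n f g) (H : PowerSeries ℚ) :
    aeq n (compPS f H) (compPS g H) := by
  intro k hk
  rw [coeff_compPS, coeff_compPS]
  unfold psum
  rw [map_sum, map_sum]
  refine Finset.sum_congr rfl fun j hj => ?_
  rw [Finset.mem_range] at hj
  rw [hf j (by omega)]

theorem compPS_X_right (G : PowerSeries ℚ) : compPS G X = G := by
  ext n
  rw [coeff_compPS]
  unfold psum
  rw [map_sum]
  rw [Finset.sum_eq_single n (fun k _ hk => by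
      rw [LinearMap.map_smul, coeff_X_pow, if_neg (fun h => hk h.symm), smul_zero])
    (fun h => absurd (Finset.mem_range.mpr (Nat.lt_succ_self n)) h)]
  rw [LinearMap.map_smul, coeff_X_pow, if_pos rfl, smul_eq_mul, mul_one]

theorem compPS_psum {H : PowerSeries ℚ} (hH : constantCoeff H = 0) (m : ℕ)
    (G K : PowerSeries ℚ) : compPS (psum m G K) H = psum m G (compPS K H) := by
  unfold psum
  rw [compPS_sum]
  refine Finset.sum_congr rfl fun k _ => ?_
  rw [compPS_smul, compPS_pow hH]

theorem compPS_assoc {H K : PowerSeries ℚ} (hH : constantCoeff H = 0)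
    (hK : constantCoeff K = 0) (G : PowerSeries ℚ) :
    compPS (compPS G H) K = compPS G (compPS H K) := by
  have hHK : constantCoeff (compPS H K) = 0 := by
    rw [constantCoeff_compPS', hH]
  apply eq_of_forall_aeq
  intro n
  have a1 : aeq n (compPS (compPS G H) K) (compPS (psum (n + 1) G H) K) :=
    compPS_congr (aeq_compPS_psum hH G (Nat.lt_succ_self n)) K
  rw [compPS_psum hK] at a1
  exact aeq_trans a1 (aeq_symm (aeq_compPS_psum hHK G (Nat.lt_succ_self n)))

/-- `W ↦ compPS G W` is injective when `coeff 1 G ≠ 0`. -/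
theorem compPS_right_inj {G W W' : PowerSeries ℚ} (hW : constantCoeff W = 0)
    (hW' : constantCoeff W' = 0) (hG : coeff 1 G ≠ 0)
    (h : compPS G W = compPS G W') : W = W' := by
  apply eq_of_forall_aeq
  intro n
  induction n with
  | zero =>
    intro k hk
    interval_cases k
    rw [coeff_zero_eq_constantCoeff_apply, coeff_zero_eq_constantCoeff_apply, hW, hW']
  | succ n ih =>
    have hpow : ∀ k ∈ Finset.range (n + 2), k ≠ 1 →
        coeff (n + 1) (W ^ k) = coeff (n + 1) (W' ^ k) := by
      intro k _ hk1
      rcases Nat.eq_zero_or_pos k with rfl | hk0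
      · simp
      obtain ⟨j, rfl⟩ : ∃ j, k = j + 2 := ⟨k - 2, by omega⟩
      have h1 : constantCoeff (W ^ (j + 1)) = 0 := by
        rw [map_pow, hW, zero_pow (Nat.succ_ne_zero j)]
      have h2 : constantCoeff W = 0 := hW
      have := aeq_mul_succ h1 h2 (aeq_pow ih (j + 1)) ih
      rw [← pow_succ] at this
      exact this (n + 1) le_rfl
    have hco := congrArg (coeff (n + 1)) h
    rw [coeff_compPS, coeff_compPS] at hco
    unfold psum at hco
    rw [map_sum, map_sum] at hco
    have hmem : (1 : ℕ) ∈ Finset.range (n + 2) := Finset.mem_range.mpr (by omega)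
    rw [← Finset.add_sum_erase _ _ hmem, ← Finset.add_sum_erase _ _ hmem] at hco
    have herase : ∑ k ∈ (Finset.range (n + 2)).erase 1, coeff (n + 1) (coeff k G • W ^ k)
        = ∑ k ∈ (Finset.range (n + 2)).erase 1, coeff (n + 1) (coeff k G • W' ^ k) := by
      refine Finset.sum_congr rfl fun k hk => ?_
      rw [LinearMap.map_smul, LinearMap.map_smul,
        hpow k (Finset.mem_of_mem_erase hk) (Finset.ne_of_mem_erase hk)]
    rw [herase] at hco
    have hkey : coeff 1 G * coeff (n + 1) W = coeff 1 G * coeff (n + 1) W' := by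
      have := add_right_cancel hco
      simpa [smul_eq_mul] using this
    have hcoeff : coeff (n + 1) W = coeff (n + 1) W' := mul_left_cancel₀ hG hkey
    intro k hk
    rcases Nat.lt_or_ge k (n + 1) with h' | h'
    · exact ih k (by omega)
    · have : k = n + 1 := by omega
      rw [this, hcoeff]


theorem descPochhammer_smeval_rat (q : ℚ) (k : ℕ) :
    (descPochhammer ℤ k).smeval q = ∏ j ∈ Finset.range k, (q - (j : ℚ)) := by
  induction k with
  | zero => simp [descPochhammer_zero, Polynomial.smeval_one]
  | succ k ih =>
    rw [descPochhammer_succ_right, Polynomial.smeval_mul, ih, Finset.prod_range_succ]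
    congr 1
    rw [Polynomial.smeval_sub, Polynomial.smeval_X, Polynomial.smeval_natCast]
    simp

theorem qbinom_eq_choose (q : ℚ) (k : ℕ) : qbinom q k = Ring.choose q k := by
  have h := Ring.descPochhammer_eq_factorial_smul_choose (R := ℚ) q k
  rw [descPochhammer_smeval_rat] at h
  rw [qbinom, h, nsmul_eq_mul]
  field_simp

theorem qbinom_vandermonde (q r : ℚ) (s : ℕ) :
    qbinom (q + r) s = ∑ p ∈ Finset.HasAntidiagonal.antidiagonal s, qbinom q p.1 * qbinom r p.2 := by
  simp only [qbinom_eq_choose]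
  exact Ring.add_choose_eq s (Commute.all q r)

theorem qbinom_zero (q : ℚ) : qbinom q 0 = 1 := by simp [qbinom]

theorem qbinom_one_right (q : ℚ) : qbinom q 1 = q := by simp [qbinom]



/-! ### The binomial series and `onePlusPow` -/

noncomputable def bser (q : ℚ) : PowerSeries ℚ := PowerSeries.mk (qbinom q)

theorem coeff_bser (q : ℚ) (k : ℕ) : coeff k (bser q) = qbinom q k := coeff_mk k _

theorem onePlusPow_eq (u : PowerSeries ℚ) (q : ℚ) : onePlusPow u q = compPS (bser q) u := by
  ext n
  simp [onePlusPow, compPS, coeff_mk, bser]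

theorem qbinom_zero_left (k : ℕ) : qbinom 0 k = if k = 0 then 1 else 0 := by
  rcases Nat.eq_zero_or_pos k with rfl | hk
  · simp [qbinom]
  · rw [if_neg (by omega), qbinom, Finset.prod_eq_zero (Finset.mem_range.mpr hk) (by simp),
      zero_div]

theorem qbinom_one_left (k : ℕ) : qbinom 1 k = if k ≤ 1 then 1 else 0 := by
  match k with
  | 0 => simp [qbinom]
  | 1 => simp [qbinom]
  | (n+2) =>
    rw [if_neg (by omega), qbinom, Finset.prod_eq_zero (Finset.mem_range.mpr (show 1 < n + 2 by omega)) (by simp),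
      zero_div]

theorem bser_mul (q r : ℚ) : bser q * bser r = bser (q + r) := by
  ext n
  rw [coeff_mul, coeff_bser, qbinom_vandermonde]
  refine Finset.sum_congr rfl fun p _ => ?_
  rw [coeff_bser, coeff_bser]

theorem bser_zero : bser 0 = 1 := by
  ext n
  rw [coeff_bser, qbinom_zero_left, coeff_one]

theorem bser_one : bser 1 = 1 + X := by
  ext n
  rw [coeff_bser, qbinom_one_left, map_add, coeff_one, coeff_X]
  rcases Nat.lt_or_ge n 2 with h | h
  · interval_cases n <;> norm_num
  · rw [if_neg (by omega), if_neg (by omega), if_neg (by omega)]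
    norm_num

theorem onePlusPow_mul {u : PowerSeries ℚ} (hu : constantCoeff u = 0) (q r : ℚ) :
    onePlusPow u q * onePlusPow u r = onePlusPow u (q + r) := by
  rw [onePlusPow_eq, onePlusPow_eq, onePlusPow_eq, ← bser_mul, compPS_mul hu]

theorem onePlusPow_zero (u : PowerSeries ℚ) : onePlusPow u 0 = 1 := by
  rw [onePlusPow_eq, bser_zero, compPS_one]

theorem constantCoeff_onePlusPow (u : PowerSeries ℚ) (q : ℚ) :
    coeff 0 (onePlusPow u q) = 1 := by
  rw [onePlusPow_eq, constantCoeff_compPS, coeff_bser, qbinom_zero]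

theorem compPS_onePlusPow {u H : PowerSeries ℚ} (hu : constantCoeff u = 0)
    (hH : constantCoeff H = 0) (q : ℚ) :
    compPS (onePlusPow u q) H = onePlusPow (compPS u H) q := by
  rw [onePlusPow_eq, compPS_assoc hu hH, onePlusPow_eq]

theorem aeq_onePlusPow_one {n : ℕ} {u : PowerSeries ℚ} (hu : aeq n u 0) (q : ℚ) :
    aeq n (onePlusPow u q) 1 := by
  intro k hk
  rw [onePlusPow_eq, coeff_compPS]
  unfold psum
  rw [map_sum]
  rw [Finset.sum_eq_single 0 (fun j _ hj => by
      obtain ⟨j', rfl⟩ := Nat.exists_eq_succ_of_ne_zero hj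
      rw [LinearMap.map_smul]
      have h0 : coeff k (u ^ (j' + 1)) = 0 := by
        have := (aeq_pow hu (j' + 1)) k hk
        rwa [zero_pow (Nat.succ_ne_zero j'), map_zero] at this
      rw [h0, smul_zero])
    (fun h => absurd (Finset.mem_range.mpr (Nat.succ_pos k)) h)]
  rw [coeff_bser, qbinom_zero, pow_zero, one_smul]

theorem aeq_onePlusPow_linear {n : ℕ} {u : PowerSeries ℚ} (hu0 : constantCoeff u = 0)
    (h2 : ∀ j, 2 ≤ j → aeq n (u ^ j) 0) (q : ℚ) :
    aeq n (onePlusPow u q) (1 + q • u) := by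
  intro k hk
  rcases Nat.eq_zero_or_pos k with rfl | hkpos
  · rw [coeff_zero_eq_constantCoeff_apply, ← coeff_zero_eq_constantCoeff_apply,
      constantCoeff_onePlusPow, map_add, LinearMap.map_smul]
    rw [coeff_zero_eq_constantCoeff_apply, constantCoeff_one, coeff_zero_eq_constantCoeff_apply,
      hu0, smul_zero, add_zero]
  · rw [onePlusPow_eq, coeff_compPS]
    unfold psum
    rw [map_sum]
    have hsub : Finset.range 2 ⊆ Finset.range (k + 1) := Finset.range_subset_range.mpr (by omega)
    rw [← Finset.sum_subset hsub (fun j _ hj => by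
      rw [Finset.mem_range, not_lt] at hj
      rw [LinearMap.map_smul, (h2 j hj) k hk, map_zero, smul_zero])]
    rw [Finset.sum_range_succ, Finset.sum_range_one, coeff_bser, coeff_bser, qbinom_zero,
      qbinom_one_right, pow_zero, pow_one, one_smul, map_add]

/-! ### `prodTail` -/

def tame (g : ℕ → PowerSeries ℚ) : Prop := ∀ i, 1 ≤ i → aeq (i - 1) (g i) 1

theorem coeff_prodTail (g : ℕ → PowerSeries ℚ) (n : ℕ) :
    coeff n (prodTail g) = coeff n (∏ i ∈ Finset.Icc 1 n, g i) := coeff_mk n _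

theorem aeq_prodTail_prod {g : ℕ → PowerSeries ℚ} (hg : tame g) {n m : ℕ} (hm : n ≤ m) :
    aeq n (prodTail g) (∏ i ∈ Finset.Ioc 0 m, g i) := by
  intro k hk
  rw [coeff_prodTail, (show Finset.Icc 1 _ = Finset.Ioc 0 _ from Finset.Icc_add_one_left_eq_Ioc (0 : ℕ) _)]
  rw [← Finset.prod_Ioc_consecutive g (Nat.zero_le k) (le_trans hk hm)]
  have htail : aeq k (∏ i ∈ Finset.Ioc k m, g i) 1 := by
    have h := aeq_prod (n := k) (s := Finset.Ioc k m) (f' := fun _ => 1) (fun i hi => by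
      rw [Finset.mem_Ioc] at hi
      exact aeq_mono (n := i - 1) (hg i (by omega)) (by omega))
    rwa [Finset.prod_const_one] at h
  have h2 := aeq_mul (aeq_refl k (∏ i ∈ Finset.Ioc 0 k, g i)) htail
  rw [mul_one] at h2
  exact (h2 k le_rfl).symm

theorem prodTail_mul {g1 g2 : ℕ → PowerSeries ℚ} (h1 : tame g1) (h2 : tame g2) :
    prodTail g1 * prodTail g2 = prodTail (fun i => g1 i * g2 i) := by
  apply eq_of_forall_aeq
  intro n
  have t12 : tame (fun i => g1 i * g2 i) := fun i hi => by
    have := aeq_mul (h1 i hi) (h2 i hi)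
    rwa [mul_one] at this
  have a1 := aeq_mul (aeq_prodTail_prod h1 (le_refl n)) (aeq_prodTail_prod h2 (le_refl n))
  rw [← Finset.prod_mul_distrib] at a1
  exact aeq_trans a1 (aeq_symm (aeq_prodTail_prod t12 (le_refl n)))

theorem prodTail_congr {g g' : ℕ → PowerSeries ℚ} (h : ∀ i, 1 ≤ i → g i = g' i) :
    prodTail g = prodTail g' := by
  ext n
  rw [coeff_prodTail, coeff_prodTail]
  congr 1
  refine Finset.prod_congr rfl fun i hi => ?_
  rw [Finset.mem_Icc] at hi
  exact h i hi.1

theorem prodTail_one : prodTail (fun _ => (1 : PowerSeries ℚ)) = 1 := by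
  ext n
  rw [coeff_prodTail, Finset.prod_const_one]

theorem constantCoeff_prodTail (g : ℕ → PowerSeries ℚ) : coeff 0 (prodTail g) = 1 := by
  rw [coeff_prodTail]
  simp

theorem compPS_prod {H : PowerSeries ℚ} (hH : constantCoeff H = 0) (s : Finset ℕ)
    (f : ℕ → PowerSeries ℚ) : compPS (∏ i ∈ s, f i) H = ∏ i ∈ s, compPS (f i) H := by
  classical
  induction s using Finset.induction_on with
  | empty => simpa using compPS_one H
  | insert _ _ hx ih => rw [Finset.prod_insert hx, Finset.prod_insert hx, compPS_mul hH, ih]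

theorem compPS_prodTail {g : ℕ → PowerSeries ℚ} {H : PowerSeries ℚ} (hg : tame g)
    (hH : constantCoeff H = 0) :
    compPS (prodTail g) H = prodTail (fun i => compPS (g i) H) := by
  apply eq_of_forall_aeq
  intro n
  have tg' : tame (fun i => compPS (g i) H) := fun i hi => by
    have := compPS_congr (hg i hi) H
    rwa [compPS_one] at this
  have a1 := compPS_congr (aeq_prodTail_prod hg (le_refl n)) H
  rw [compPS_prod hH] at a1
  exact aeq_trans a1 (aeq_symm (aeq_prodTail_prod tg' (le_refl n)))

/-! ### The specific products -/

theorem aeq_neg_pow {f : PowerSeries ℚ} (hf : constantCoeff f = 0) {i : ℕ} (hi : 1 ≤ i) :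
    aeq (i - 1) (-(f ^ i)) 0 := by
  intro k hk
  rw [map_neg, coeff_pow_eq_zero hf (show k < i by omega), neg_zero, map_zero]

/-- the `i`-th factor of `funcEqProd F b` -/
noncomputable def gfac (F : PowerSeries ℚ) (b : ℕ → ℚ) (i : ℕ) : PowerSeries ℚ :=
  onePlusPow (-((X * F) ^ i)) ((i : ℚ) * b i)

theorem funcEqProd_eq (F : PowerSeries ℚ) (b : ℕ → ℚ) :
    funcEqProd F b = prodTail (gfac F b) := rfl

theorem tame_gfac (F : PowerSeries ℚ) (b : ℕ → ℚ) : tame (gfac F b) := fun i hi =>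
  aeq_onePlusPow_one (aeq_neg_pow (by simp) hi) _

theorem constantCoeff_XF (F : PowerSeries ℚ) : constantCoeff (X * F) = 0 := by simp

theorem funcEq_coeff (F : PowerSeries ℚ) (hF : constantCoeff F = 1) (b : ℕ → ℚ) (m : ℕ) :
    coeff (m + 1) (funcEqProd F b) =
      coeff (m + 1) (∏ i ∈ Finset.Ioc 0 m, gfac F b i) - ((m + 1 : ℕ) : ℚ) * b (m + 1) := by
  have hXF : constantCoeff (X * F) = 0 := constantCoeff_XF F
  set u : PowerSeries ℚ := -((X * F) ^ (m + 1)) with hu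
  have hu0 : constantCoeff u = 0 := by
    have h := aeq_neg_pow hXF (show 1 ≤ m + 1 by omega) 0 (Nat.zero_le m)
    rw [map_zero] at h
    rw [← coeff_zero_eq_constantCoeff_apply]
    exact h
  have h2 : ∀ j, 2 ≤ j → aeq (m + 1) (u ^ j) 0 := by
    intro j hj k hk
    have hlt : k < (m + 1) * j := by nlinarith
    rw [map_zero]
    rcases Nat.even_or_odd j with he | ho
    · rw [hu, he.neg_pow, ← pow_mul]
      exact coeff_pow_eq_zero hXF hlt
    · rw [hu, ho.neg_pow, ← pow_mul, map_neg, coeff_pow_eq_zero hXF hlt, neg_zero]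
  set q : ℚ := ((m + 1 : ℕ) : ℚ) * b (m + 1) with hq
  have hlin : aeq (m + 1) (gfac F b (m + 1)) (1 + q • u) := by
    have h := aeq_onePlusPow_linear hu0 h2 q
    rw [gfac]
    exact h
  rw [funcEqProd_eq, coeff_prodTail, (show Finset.Icc 1 _ = Finset.Ioc 0 _ from Finset.Icc_add_one_left_eq_Ioc (0 : ℕ) _), Finset.prod_Ioc_succ_top (Nat.zero_le m)]
  set Q := ∏ i ∈ Finset.Ioc 0 m, gfac F b i with hQ
  have hQ0 : coeff 0 Q = 1 := by
    rw [coeff_zero_eq_constantCoeff_apply, hQ, map_prod]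
    refine Finset.prod_eq_one fun i _ => ?_
    rw [← coeff_zero_eq_constantCoeff_apply]
    exact constantCoeff_onePlusPow _ _
  have hmain := aeq_mul (aeq_refl (m + 1) Q) hlin (m + 1) le_rfl
  have hQu : coeff (m + 1) (Q * u) = -1 := by
    rw [hu, mul_neg, map_neg, coeff_mul]
    rw [Finset.sum_eq_single (0, m + 1) (fun p hp hne => by
        rw [Finset.HasAntidiagonal.mem_antidiagonal] at hp
        have hp1 : 1 ≤ p.1 := by
          by_contra hc
          apply hne
          have : p.1 = 0 := by omega
          have : p = (0, m + 1) := Prod.ext this (by omega)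
          exact this
        rw [coeff_pow_eq_zero hXF (show p.2 < m + 1 by omega), mul_zero])
      (fun h => absurd (Finset.HasAntidiagonal.mem_antidiagonal.mpr (by simp)) h)]
    rw [hQ0, one_mul, mul_pow, coeff_X_pow_mul' (F ^ (m + 1)) (m + 1) (m + 1), if_pos le_rfl,
      Nat.sub_self, coeff_zero_eq_constantCoeff_apply, map_pow, hF, one_pow]
  rw [hmain, mul_add, mul_one, map_add, mul_smul_comm, LinearMap.map_smul, hQu]
  rw [hq]
  simp only [smul_eq_mul]
  ring

/-! ### Existence and uniqueness of `b` -/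

noncomputable def bstep (F : PowerSeries ℚ) : ℕ → (ℕ → ℚ)
  | 0 => fun _ => 0
  | n + 1 => Function.update (bstep F n) (n + 1)
      ((coeff (n + 1) (∏ i ∈ Finset.Ioc 0 n, gfac F (bstep F n) i) - coeff (n + 1) F) /
        ((n + 1 : ℕ) : ℚ))

noncomputable def bsol (F : PowerSeries ℚ) (n : ℕ) : ℚ := bstep F n n

theorem bstep_eq (F : PowerSeries ℚ) : ∀ n m, m ≤ n → bstep F n m = bsol F m := by
  intro n
  induction n with
  | zero => intro m hm; interval_cases m; rfl
  | succ n ih =>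
    intro m hm
    rcases Nat.lt_or_ge m (n + 1) with h | h
    · rw [bstep, Function.update_of_ne (by omega), ih m (by omega)]
    · have hm1 : m = n + 1 := by omega
      subst hm1; rfl

theorem bsol_zero (F : PowerSeries ℚ) : bsol F 0 = 0 := rfl

theorem gfac_congr {F : PowerSeries ℚ} {b b' : ℕ → ℚ} {s : Finset ℕ}
    (h : ∀ i ∈ s, b i = b' i) : ∏ i ∈ s, gfac F b i = ∏ i ∈ s, gfac F b' i :=
  Finset.prod_congr rfl fun i hi => by rw [gfac, gfac, h i hi]

theorem funcEq_exists (F : PowerSeries ℚ) (hF : constantCoeff F = 1) :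
    F = funcEqProd F (bsol F) := by
  ext n
  cases n with
  | zero =>
    rw [coeff_zero_eq_constantCoeff_apply, hF, funcEqProd_eq, constantCoeff_prodTail]
  | succ m =>
    rw [funcEq_coeff F hF (bsol F) m]
    have hprod : ∏ i ∈ Finset.Ioc 0 m, gfac F (bsol F) i
        = ∏ i ∈ Finset.Ioc 0 m, gfac F (bstep F m) i :=
      gfac_congr fun i hi => (bstep_eq F m i (Finset.mem_Ioc.mp hi).2).symm
    have hb : bsol F (m + 1) =
        (coeff (m + 1) (∏ i ∈ Finset.Ioc 0 m, gfac F (bstep F m) i) - coeff (m + 1) F) /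
          ((m + 1 : ℕ) : ℚ) := by
      show bstep F (m + 1) (m + 1) = _
      rw [bstep, Function.update_self]
    rw [hprod, hb]
    have hne : ((m + 1 : ℕ) : ℚ) ≠ 0 := Nat.cast_ne_zero.mpr (Nat.succ_ne_zero m)
    field_simp
    ring

theorem funcEq_unique {F : PowerSeries ℚ} (hF : constantCoeff F = 1) {b b' : ℕ → ℚ}
    (h0 : b 0 = b' 0) (hb : F = funcEqProd F b) (hb' : F = funcEqProd F b') : b = b' := by
  have key : ∀ n, ∀ k, k ≤ n → b k = b' k := by
    intro n
    induction n with
    | zero => intro k hk; interval_cases k; exact h0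
    | succ n ih =>
      intro k hk
      rcases Nat.lt_or_ge k (n + 1) with h | h
      · exact ih k (by omega)
      · have hk1 : k = n + 1 := by omega
        subst hk1
        have e1 := funcEq_coeff F hF b n
        have e2 := funcEq_coeff F hF b' n
        rw [← hb] at e1
        rw [← hb'] at e2
        have hprod := gfac_congr (F := F) (b := b) (b' := b') (s := Finset.Ioc 0 n)
          (fun i hi => ih i (Finset.mem_Ioc.mp hi).2)
        rw [hprod] at e1
        have hc : ((n + 1 : ℕ) : ℚ) ≠ 0 := Nat.cast_ne_zero.mpr (Nat.succ_ne_zero n)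
        have hmul : ((n + 1 : ℕ) : ℚ) * b (n + 1) = ((n + 1 : ℕ) : ℚ) * b' (n + 1) := by
          linarith [e1, e2]
        exact mul_left_cancel₀ hc hmul
  funext k
  exact key k k le_rfl

/-! ### The composition identities -/

theorem main2 (F : PowerSeries ℚ) (hF : constantCoeff F = 1) (b : ℕ → ℚ)
    (hb : F = funcEqProd F b) :
    compPS (-(X * eulerProd b)) (-(X * F)) = X ∧
      compPS (-(X * F)) (-(X * eulerProd b)) = X := by
  set H : PowerSeries ℚ := -(X * F) with hH
  have hH0 : constantCoeff H = 0 := by simp [hH]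
  set E : PowerSeries ℚ := eulerProd b with hE
  set G : PowerSeries ℚ := -(X * E) with hG
  have hG0 : constantCoeff G = 0 := by simp [hG]
  have hEdef : E = prodTail (fun i => onePlusPow (-((-X : PowerSeries ℚ) ^ i)) (-((i : ℚ) * b i))) := rfl
  have tE : tame (fun i => onePlusPow (-((-X : PowerSeries ℚ) ^ i)) (-((i : ℚ) * b i))) :=
    fun i hi => aeq_onePlusPow_one (aeq_neg_pow (by simp) hi) _
  set E' := prodTail (fun i => onePlusPow (-((X * F) ^ i)) (-((i : ℚ) * b i))) with hE'
  have tE' : tame (fun i => onePlusPow (-((X * F) ^ i)) (-((i : ℚ) * b i))) :=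
    fun i hi => aeq_onePlusPow_one (aeq_neg_pow (constantCoeff_XF F) hi) _
  have hcompE : compPS E H = E' := by
    rw [hEdef, compPS_prodTail tE hH0, hE']
    refine prodTail_congr fun i hi => ?_
    have hvi : constantCoeff (-((-X : PowerSeries ℚ) ^ i)) = 0 := by
      have h := aeq_neg_pow (f := (-X : PowerSeries ℚ)) (by simp) hi 0 (by omega)
      rw [map_zero] at h
      rw [← coeff_zero_eq_constantCoeff_apply]
      exact h
    rw [compPS_onePlusPow hvi hH0]
    rw [compPS_neg, compPS_pow hH0, compPS_neg, compPS_X hH0, hH, neg_neg]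
  have hui0 : ∀ i, 1 ≤ i → constantCoeff (-((X * F) ^ i)) = 0 := by
    intro i hi
    have h := aeq_neg_pow (constantCoeff_XF F) hi 0 (by omega)
    rw [map_zero] at h
    rw [← coeff_zero_eq_constantCoeff_apply]
    exact h
  have hFE' : F * E' = 1 := by
    conv_lhs => rw [hb, funcEqProd_eq]
    rw [hE', prodTail_mul (tame_gfac F b) tE']
    have hone : ∀ i, 1 ≤ i →
        gfac F b i * onePlusPow (-((X * F) ^ i)) (-((i : ℚ) * b i)) = (fun _ => (1 : PowerSeries ℚ)) i := by
      intro i hi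
      rw [gfac, onePlusPow_mul (hui0 i hi), add_neg_cancel, onePlusPow_zero]
    rw [prodTail_congr hone, prodTail_one]
  have h1 : compPS G H = X := by
    rw [hG, compPS_neg, compPS_mul hH0, compPS_X hH0, hcompE, hH]
    rw [neg_mul, neg_neg, mul_assoc, hFE', mul_one]
  refine ⟨h1, ?_⟩
  have hc1G : coeff 1 G ≠ 0 := by
    rw [hG, map_neg]
    have h01 : coeff 1 (X * E) = coeff 0 E := coeff_succ_X_mul 0 E
    rw [h01, hEdef, constantCoeff_prodTail]
    norm_num
  set W := compPS H G with hW
  have hW0 : constantCoeff W = 0 := by rw [hW, constantCoeff_compPS', hH0]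
  have hassoc := compPS_assoc hH0 hG0 G
  rw [h1, compPS_X hG0] at hassoc
  have hGX : compPS G X = G := compPS_X_right G
  have hXc : constantCoeff (X : PowerSeries ℚ) = 0 := by simp
  have hfin := compPS_right_inj hW0 hXc hc1G (hassoc.symm.trans hGX.symm)
  rw [hW] at hfin
  exact hfin

end CompAux

/-- (Remark after Theorem `duality`.)  Let `F ∈ ℚ[[t]]` with `F(0) = 1`, written as the
Euler product `F(t) = ∏_{i≥1}(1-(-t)^i)^{-i aᵢ}`.  Then there exist unique `bᵢ` (`i ≥ 1`,
normalized by `b 0 = 0`) with `F(t) = ∏_{i≥1}(1-(tF(t))^i)^{i bᵢ}`, and for such `b` the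
series `H(t) = -t·F(t)` is the compositional inverse of
`G(t) = -t·∏_{i≥1}(1-(-t)^i)^{-i bᵢ}`, i.e. `G(H(t)) = t = H(G(t))`. -/
theorem compositional_inverse_of_euler_product (F : PowerSeries ℚ)
    (hF : PowerSeries.constantCoeff F = 1) (a : ℕ → ℚ) (hA : F = eulerProd a) :
    (∃! b : ℕ → ℚ, b 0 = 0 ∧ F = funcEqProd F b) ∧
      ∀ b : ℕ → ℚ, F = funcEqProd F b →
        compPS (-(PowerSeries.X * eulerProd b)) (-(PowerSeries.X * F)) = PowerSeries.X ∧
        compPS (-(PowerSeries.X * F)) (-(PowerSeries.X * eulerProd b)) = PowerSeries.X := by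
  constructor
  · refine ⟨CompAux.bsol F, ⟨CompAux.bsol_zero F, CompAux.funcEq_exists F hF⟩, ?_⟩
    intro b' hb'
    exact CompAux.funcEq_unique hF (by rw [hb'.1, CompAux.bsol_zero]) hb'.2
      (CompAux.funcEq_exists F hF)
  · intro b hb
    exact CompAux.main2 F hF b hb
end
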